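/- arXiv:2501.08221 — 3 statements merged into one kernel-verified Lean document; each statement's English description precedes it below -/
import Mathlib

section
/- Let A be a real k × (k+2) matrix of rank k, let A^⊥ be a 2 × (k+2) matrix whose row span is the orthogonal complement of the row span of A, and let Z be any n × (k+2) real matrix with rows Z₁, ..., Zₙ. Set zᵢ = A^⊥ Zᵢᵀ ∈ ℝ². Then there exists a nonzero constant c ∈ ℝ such that for all 1 ≤ i < j ≤ n, det(zᵢ | zⱼ) = c · det of the (k+2) × (k+2) matrix whose rows are A₁, ..., A_k, Zᵢ, Zⱼ. -/
open Matrix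

/-- A square real matrix of full rank has nonzero determinant. -/
lemma aux_det_ne_zero {m : ℕ} (M : Matrix (Fin m) (Fin m) ℝ) (h : M.rank = m) :
    M.det ≠ 0 := by
  intro h0
  obtain ⟨v, hv0, hv⟩ := (Matrix.exists_mulVec_eq_zero_iff (M := M)).2 h0
  have hker : v ∈ LinearMap.ker M.mulVecLin := by
    simpa [Matrix.mulVecLin_apply] using hv
  have hrn := LinearMap.finrank_range_add_finrank_ker M.mulVecLin
  have hdom : Module.finrank ℝ (Fin m → ℝ) = m := by simp
  have hkz : Module.finrank ℝ (LinearMap.ker M.mulVecLin) = 0 := by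
    have hrank : M.rank = Module.finrank ℝ (LinearMap.range M.mulVecLin) := rfl
    omega
  have hbot : LinearMap.ker M.mulVecLin = ⊥ := Submodule.finrank_eq_zero.mp hkz
  rw [hbot] at hker
  exact hv0 (by simpa using hker)

/-- Projection lemma.  `A` is a real `k × (k+2)` matrix of rank `k`, `A^⊥` a
`2 × (k+2)` matrix whose row span is the orthogonal complement of the row span of `A`
(encoded: rank 2 and all rows orthogonal to the rows of `A`).  With `zᵢ = A^⊥ Zᵢᵀ ∈ ℝ²`,
there is a nonzero constant `c` with `det(zᵢ | zⱼ) = c · det(A₁,…,A_k,Zᵢ,Zⱼ)` for all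
`i < j`. -/
theorem stmt3 (k n : ℕ) (A : Matrix (Fin k) (Fin (k + 2)) ℝ) (hA : A.rank = k)
    (Aperp : Matrix (Fin 2) (Fin (k + 2)) ℝ) (hAperp : Aperp.rank = 2)
    (horth : ∀ a b, Aperp a ⬝ᵥ A b = 0)
    (Z : Matrix (Fin n) (Fin (k + 2)) ℝ)
    (z : Fin n → Fin 2 → ℝ) (hz : ∀ i a, z i a = Aperp a ⬝ᵥ Z i) :
    ∃ c : ℝ, c ≠ 0 ∧ ∀ i j : Fin n, i < j →
      z i 0 * z j 1 - z i 1 * z j 0 =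
        c * (Matrix.of (fun r : Fin (k + 2) =>
          if h : (r : ℕ) < k then A ⟨r, h⟩ else if (r : ℕ) = k then Z i else Z j)).det := by
  classical
  set e : Fin k ⊕ Fin 2 ≃ Fin (k + 2) := finSumFinEquiv with he
  set B : Matrix (Fin (k + 2)) (Fin (k + 2)) ℝ :=
    Matrix.of fun r => Sum.elim (fun a => A a) (fun b => Aperp b) (e.symm r) with hB
  have hBl : ∀ a : Fin k, B (e (Sum.inl a)) = A a := by
    intro a; funext t; simp [hB]
  have hBr : ∀ b : Fin 2, B (e (Sum.inr b)) = Aperp b := by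
    intro b; funext t; simp [hB]
  -- Gram determinants are nonzero
  have hG : (A * Aᵀ).det ≠ 0 := by
    refine aux_det_ne_zero _ ?_
    rw [Matrix.rank_self_mul_transpose, hA]
  have hP : (Aperp * Aperpᵀ).det ≠ 0 := by
    refine aux_det_ne_zero _ ?_
    rw [Matrix.rank_self_mul_transpose, hAperp]
  -- B has nonzero determinant
  have hBB : ((B * Bᵀ).submatrix e e) =
      Matrix.fromBlocks (A * Aᵀ) 0 0 (Aperp * Aperpᵀ) := by
    ext x y
    cases x with
    | inl a =>
      cases y with
      | inl b =>
        simp [Matrix.submatrix_apply, Matrix.mul_apply, hBl]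
      | inr b =>
        have := horth b a
        simp only [Matrix.submatrix_apply, Matrix.mul_apply, Matrix.transpose_apply, hBl, hBr]
        simpa [dotProduct, mul_comm] using this
    | inr a =>
      cases y with
      | inl b =>
        have := horth a b
        simp only [Matrix.submatrix_apply, Matrix.mul_apply, Matrix.transpose_apply, hBl, hBr]
        simpa [dotProduct] using this
      | inr b =>
        simp [Matrix.submatrix_apply, Matrix.mul_apply, hBr]
  have hdetBB : (B * Bᵀ).det = (A * Aᵀ).det * (Aperp * Aperpᵀ).det := by
    rw [← Matrix.det_submatrix_equiv_self e, hBB, Matrix.det_fromBlocks_zero₁₂]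
  have hdetB : B.det ≠ 0 := by
    intro h0
    rw [Matrix.det_mul, Matrix.det_transpose, h0, mul_zero] at hdetBB
    exact (mul_ne_zero hG hP) hdetBB.symm
  refine ⟨B.det / (A * Aᵀ).det, div_ne_zero hdetB hG, ?_⟩
  intro i j _
  set M : Matrix (Fin (k + 2)) (Fin (k + 2)) ℝ :=
    Matrix.of (fun r : Fin (k + 2) =>
      if h : (r : ℕ) < k then A ⟨r, h⟩ else if (r : ℕ) = k then Z i else Z j) with hM
  -- rows of M
  have hMl : ∀ a : Fin k, M (e (Sum.inl a)) = A a := by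
    intro a
    have ha : ((e (Sum.inl a) : Fin (k + 2)) : ℕ) = (a : ℕ) := by
      simp [he, finSumFinEquiv_apply_left]
    have hlt : ((e (Sum.inl a) : Fin (k + 2)) : ℕ) < k := ha ▸ a.isLt
    funext t
    simp only [hM, Matrix.of_apply]
    rw [dif_pos hlt]
    have : (⟨((e (Sum.inl a) : Fin (k + 2)) : ℕ), hlt⟩ : Fin k) = a := Fin.ext ha
    rw [this]
  have hMr0 : M (e (Sum.inr 0)) = Z i := by
    have ha : ((e (Sum.inr (0 : Fin 2)) : Fin (k + 2)) : ℕ) = k := by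
      simp [he, finSumFinEquiv_apply_right]
    funext t
    simp only [hM, Matrix.of_apply]
    rw [dif_neg (by rw [ha]; omega), if_pos ha]
  have hMr1 : M (e (Sum.inr 1)) = Z j := by
    have ha : ((e (Sum.inr (1 : Fin 2)) : Fin (k + 2)) : ℕ) = k + 1 := by
      simp [he, finSumFinEquiv_apply_right]
    funext t
    simp only [hM, Matrix.of_apply]
    rw [dif_neg (by rw [ha]; omega), if_neg (by rw [ha]; omega)]
  -- block structure of M * Bᵀ
  set D : Matrix (Fin 2) (Fin 2) ℝ := !![z i 0, z i 1; z j 0, z j 1] with hD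
  set C : Matrix (Fin 2) (Fin k) ℝ :=
    Matrix.of ![fun b => Z i ⬝ᵥ A b, fun b => Z j ⬝ᵥ A b] with hC
  have hzz : ∀ (w : Fin n) (b : Fin 2),
      ∑ t, Z w t * Aperp b t = z w b := by
    intro w b; rw [hz]; simp [dotProduct, mul_comm]
  have hMB : ((M * Bᵀ).submatrix e e) = Matrix.fromBlocks (A * Aᵀ) 0 C D := by
    ext x y
    cases x with
    | inl a =>
      cases y with
      | inl b =>
        simp [Matrix.submatrix_apply, Matrix.mul_apply, hMl, hBl]
      | inr b =>
        have := horth b a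
        simp only [Matrix.submatrix_apply, Matrix.mul_apply, Matrix.transpose_apply, hMl, hBr]
        simpa [dotProduct, mul_comm] using this
    | inr a =>
      rcases (show a = 0 ∨ a = 1 by omega) with rfl | rfl
      all_goals cases y with
      | inl b =>
        first
        | (simp only [Matrix.submatrix_apply, Matrix.mul_apply, Matrix.transpose_apply,
            hMr0, hMr1, hBl, Matrix.fromBlocks_apply₂₁]
           simp [hC, dotProduct])
      | inr b =>
        rcases (show b = 0 ∨ b = 1 by omega) with rfl | rfl <;>
        · simp only [Matrix.submatrix_apply, Matrix.mul_apply, Matrix.transpose_apply,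
            hMr0, hMr1, hBr, Matrix.fromBlocks_apply₂₂, hD]
          rw [hzz]
          simp
  have hdetMB : M.det * B.det = (A * Aᵀ).det * D.det := by
    rw [← Matrix.det_transpose B, ← Matrix.det_mul,
      ← Matrix.det_submatrix_equiv_self e (M * Bᵀ), hMB,
      Matrix.det_fromBlocks_zero₁₂]
  have hDdet : D.det = z i 0 * z j 1 - z i 1 * z j 0 := by
    simp [hD, Matrix.det_fin_two]
  rw [← hDdet]
  field_simp
  linarith [hdetMB]
end

section
/- For the k = 1 limit amplituhedron (pizza slice) P = {(b, c) ∈ ℝ² : b² ≤ c ≤ b}, the rational 2-form Ω = 1/((c − b²)(c − b)) db ∧ dc is, up to a nonzero scalar, the unique rational 2-form on ℝ² with simple poles exactly along the curves c = b² and c = b and no other poles, whose residue along each boundary curve is a 1-form with simple poles only at the two vertices (0,0) and (1,1); moreover the residue of Ω along c = b is db/(b² − b) = db·(1/(b−1) − 1/b), whose residues at b = 0 and b = 1 are −1 and +1 respectively. -/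
/-! On the cone `|c| ≤ |b| / 2` the denominator `(c - b²)(c - b)` has size `≍ |b|³`, so the
decay hypothesis makes `p` bounded there. On each line `c = t b` inside the cone, `p` is then a
univariate polynomial bounded at `+∞`, hence constant, equal to `p(0, 0)`. So `p` is constant on
the box `[1, 2] × [-1/2, 1/2]`, and a polynomial is determined by its values on such a box. -/

open Filter Topology

theorem Polynomial.eval_eq_eval_of_abs_le_on_Ici (q : Polynomial ℝ) {a M : ℝ}
    (h : ∀ b, a ≤ b → |q.eval b| ≤ M) (x y : ℝ) : q.eval x = q.eval y := by
  have hbdd : IsBoundedUnder (· ≤ ·) atTop fun b => |q.eval b| :=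
    ⟨M, eventually_map.mpr (eventually_atTop.mpr ⟨a, h⟩)⟩
  rw [q.eq_C_of_degree_le_zero (q.isBoundedUnder_abs_atTop_iff.mp hbdd)]
  simp

theorem MvPolynomial.polynomial_eval_aeval {σ R : Type*} [CommSemiring R]
    (p : MvPolynomial σ R) (f : σ → Polynomial R) (b : R) :
    (aeval f p).eval b = eval (fun i => (f i).eval b) p := by
  rw [← Polynomial.coe_aeval_eq_eval, ← AlgHom.comp_apply, comp_aeval]
  rfl

theorem MvPolynomial.eval_line (p : MvPolynomial (Fin 2) ℝ) (t b : ℝ) :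
    eval ![b, t * b] p = (aeval ![Polynomial.X, Polynomial.C t * Polynomial.X] p).eval b := by
  rw [polynomial_eval_aeval]
  congr 2
  funext i
  fin_cases i <;> simp

theorem one_div_sq_sub_self {b : ℝ} (h0 : b ≠ 0) (h1 : b ≠ 1) :
    1 / (b ^ 2 - b) = 1 / (b - 1) - 1 / b := by
  have : b - 1 ≠ 0 := sub_ne_zero.mpr h1
  field_simp
  ring

theorem sq_sub_self_eq_mul (b : ℝ) : b ^ 2 - b = b * (b - 1) := by ring

theorem mul_one_div_sq_sub_self {b : ℝ} (h : b ≠ 0) : b * (1 / (b ^ 2 - b)) = 1 / (b - 1) := by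
  rw [sq_sub_self_eq_mul, one_div, mul_inv, mul_inv_cancel_left₀ h, one_div]

theorem sub_one_mul_one_div_sq_sub_self {b : ℝ} (h : b ≠ 1) :
    (b - 1) * (1 / (b ^ 2 - b)) = 1 / b := by
  rw [sq_sub_self_eq_mul, one_div, mul_inv, mul_left_comm, mul_inv_cancel₀ (sub_ne_zero.mpr h),
    mul_one, one_div]

theorem tendsto_nhdsNE_of_eq_of_continuousAt {f g : ℝ → ℝ} {a l : ℝ}
    (hfg : ∀ b, b ≠ a → f b = g b) (hg : ContinuousAt g a) (hl : g a = l) :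
    Tendsto f (𝓝[≠] a) (𝓝 l) :=
  (hl ▸ hg.tendsto.mono_left nhdsWithin_le_nhds).congr' <|
    eventually_nhdsWithin_of_forall fun b hb => (hfg b hb).symm

theorem abs_sub_le_of_abs_le_half {c y : ℝ} (hc : |c| ≤ |y| / 2) : |c - y| ≤ 3 / 2 * |y| := by
  linarith [abs_sub c y]

theorem half_abs_le_abs_sub {c y : ℝ} (hc : |c| ≤ |y| / 2) : |y| / 2 ≤ |c - y| := by
  linarith [abs_sub_abs_le_abs_sub y c, abs_sub_comm c y]

theorem abs_le_of_abs_div_le {P D B C k : ℝ} (hD : D ≠ 0) (hk : 0 ≤ k) (hDB : |D| ≤ k * B)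
    (h : B * |P / D| ≤ C) : |P| ≤ k * C :=
  calc |P| = |P / D| * |D| := by rw [abs_div, div_mul_cancel₀ _ (abs_ne_zero.mpr hD)]
    _ ≤ |P / D| * (k * B) := by gcongr
    _ = k * (B * |P / D|) := by ring
    _ ≤ k * C := by gcongr

section PizzaCone

variable {b c : ℝ} (hb : 1 ≤ |b|) (hc : |c| ≤ |b| / 2)
include hb hc

theorem abs_le_half_sq : |c| ≤ |b ^ 2| / 2 := by
  rw [abs_pow]
  nlinarith

theorem pizza_denom_ne_zero : (c - b ^ 2) * (c - b) ≠ 0 := by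
  have hb₀ : 0 < |b| := by linarith
  have hb₂ : 0 < |b ^ 2| := by rw [abs_pow]; exact pow_pos hb₀ 2
  exact mul_ne_zero
    (abs_pos.mp ((half_pos hb₂).trans_le (half_abs_le_abs_sub (abs_le_half_sq hb hc))))
    (abs_pos.mp ((half_pos hb₀).trans_le (half_abs_le_abs_sub hc)))

theorem abs_pizza_denom_le : |(c - b ^ 2) * (c - b)| ≤ 9 / 4 * |b| ^ 3 :=
  calc |(c - b ^ 2) * (c - b)| = |c - b ^ 2| * |c - b| := abs_mul _ _
    _ ≤ (3 / 2 * |b ^ 2|) * (3 / 2 * |b|) := by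
      gcongr
      exacts [abs_sub_le_of_abs_le_half (abs_le_half_sq hb hc), abs_sub_le_of_abs_le_half hc]
    _ = 9 / 4 * |b| ^ 3 := by rw [abs_pow]; ring

end PizzaCone

theorem MvPolynomial.eq_C_of_abs_le_on_cone (p : MvPolynomial (Fin 2) ℝ) {M : ℝ}
    (h : ∀ b c : ℝ, 1 ≤ b → |c| ≤ b / 2 → |eval ![b, c] p| ≤ M) : p = C (eval 0 p) := by
  have hline : ∀ t : ℝ, |t| ≤ 1 / 2 → ∀ b, eval ![b, t * b] p = eval 0 p := by
    intro t ht b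
    have hq := Polynomial.eval_eq_eval_of_abs_le_on_Ici
      (aeval ![Polynomial.X, Polynomial.C t * Polynomial.X] p) (a := 1) (M := M)
      (fun b hb => ?_) b 0
    · have h₀ : (![0, t * 0] : Fin 2 → ℝ) = 0 := by ext i; fin_cases i <;> simp
      rwa [← eval_line, ← eval_line, h₀] at hq
    · rw [← eval_line]
      refine h b _ hb ?_
      rw [abs_mul, abs_of_pos (by linarith : (0 : ℝ) < b)]
      nlinarith [abs_nonneg t]
  refine funext_set ![Set.Icc 1 2, Set.Icc (-1 / 2) (1 / 2)]
    (fun i => by fin_cases i <;> exact Set.Icc_infinite (by norm_num)) fun x hx => ?_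
  have hx₀ := hx 0 trivial
  have hx₁ := hx 1 trivial
  simp only [Fin.isValue, Matrix.cons_val_zero, Matrix.cons_val_one, Set.mem_Icc] at hx₀ hx₁
  have hx₀pos : 0 < x 0 := by linarith
  have hx_eq : x = ![x 0, (x 1 / x 0) * x 0] := by
    ext i; fin_cases i <;> simp [div_mul_cancel₀ _ hx₀pos.ne']
  rw [eval_C, hx_eq, hline]
  rw [abs_div, abs_of_pos hx₀pos, div_le_iff₀ hx₀pos, abs_le]
  constructor <;> nlinarith

/-- The canonical form of the pizza slice
`Ω = db ∧ dc / ((c − b²)(c − b))`.  Its residue along `c = b` is `g(b) db` with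
`g(b) = 1/(b² − b) = 1/(b−1) − 1/b`, whose residues at `b = 0` and `b = 1` are `−1` and
`+1`.  Uniqueness up to scalar: any polynomial numerator `p` such that `p·Ω` has no pole
at infinity (encoded by cubic decay of `p/((c−b²)(c−b))` on a cone avoiding the two
curves) and whose residues along the two boundary curves are 1-forms with (simple) poles
only at the vertices (encoded: `p(b,b)` and `p(b,b²)` are constant) must be constant. -/
theorem stmt15 (g : ℝ → ℝ) (hg : ∀ b, g b = 1 / (b ^ 2 - b)) :
    (∀ b : ℝ, b ≠ 0 → b ≠ 1 → g b = 1 / (b - 1) - 1 / b) ∧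
    Filter.Tendsto (fun b => b * g b) (nhdsWithin 0 {(0 : ℝ)}ᶜ) (nhds (-1)) ∧
    Filter.Tendsto (fun b => (b - 1) * g b) (nhdsWithin 1 {(1 : ℝ)}ᶜ) (nhds 1) ∧
    ∀ p : MvPolynomial (Fin 2) ℝ,
      (∃ Cb : ℝ, ∀ x : ℝ × ℝ, |x.2| ≤ |x.1| / 2 → 1 ≤ |x.1| →
        |x.1| ^ 3 *
          |MvPolynomial.eval ![x.1, x.2] p / ((x.2 - x.1 ^ 2) * (x.2 - x.1))| ≤ Cb) →
      (∃ k₁ : ℝ, ∀ b : ℝ, MvPolynomial.eval ![b, b] p = k₁) →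
      (∃ k₂ : ℝ, ∀ b : ℝ, MvPolynomial.eval ![b, b ^ 2] p = k₂) →
      ∃ c : ℝ, p = MvPolynomial.C c := by
  refine ⟨fun b h₀ h₁ => by rw [hg, one_div_sq_sub_self h₀ h₁], ?_, ?_, ?_⟩
  · exact tendsto_nhdsNE_of_eq_of_continuousAt
      (fun b hb => by rw [hg, mul_one_div_sq_sub_self hb])
      (by fun_prop (disch := norm_num)) (by norm_num)
  · exact tendsto_nhdsNE_of_eq_of_continuousAt
      (fun b hb => by rw [hg, sub_one_mul_one_div_sq_sub_self hb])
      (by fun_prop (disch := norm_num)) (by norm_num)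
  · rintro p ⟨Cb, hCb⟩ - -
    refine ⟨_, p.eq_C_of_abs_le_on_cone (M := 9 / 4 * Cb) fun b c hb hc => ?_⟩
    have hb' : 1 ≤ |b| := hb.trans (le_abs_self b)
    have hc' : |c| ≤ |b| / 2 := by rwa [abs_of_nonneg (by linarith : (0 : ℝ) ≤ b)]
    exact abs_le_of_abs_div_le (pizza_denom_ne_zero hb' hc') (by norm_num)
      (abs_pizza_denom_le hb' hc') (hCb (b, c) hc' hb')
end

section
/- Let f, g ∈ ℂ[t] be polynomials of formal degree n = k+1 (coefficient vectors x, y ∈ ℂ^{k+2}). The determinant of the Bézout matrix B(f, g) — the (k+1) × (k+1) matrix with entries B_{ij} = Σ_{m=max(0, i−j)}^{min(i, n−1−j)} p_{(j+m+1),(i−m)}, where p_{a,b} = x_a y_b − x_b y_a are the 2 × 2 minors of the 2 × (k+2) coefficient matrix — equals (up to sign) the resultant of f and g. In particular, det B(f, g) = 0 if and only if f and g have a common root in ℂ or their leading coefficients both vanish. -/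
/-!
Write `L`, `U` for the lower and upper triangular Toeplitz matrices and `H` for the Hankel matrix
built from the coefficients of a polynomial of formal degree `n`. The Sylvester matrix of `(g, f)`
is the block matrix `[[L f, L g], [U f, U g]]`, and multiplying it on the right by
`[[1, -H g], [0, H f]]` gives `[[L f, B], [U f, 0]]`, where `B` is the Bézout matrix: the entries
of `L g * H f - L f * H g` are sums of minors `p_{ab}` along antidiagonals, and all terms outside
the range defining `B` cancel in pairs under a reflection of the antidiagonal. Taking determinants
gives `fₙⁿ · Res = ± fₙⁿ · det B`. To cancel `fₙⁿ`, replace `f` by `f + T Xⁿ` over `R[T]`, where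
this factor is monic, and then specialise to `T = 0`.
-/

open Matrix

namespace Polynomial

open Finset

variable {R : Type*} [CommRing R]

def coeffMinor (f g : R[X]) (a b : ℕ) : R := f.coeff a * g.coeff b - f.coeff b * g.coeff a

/-- The coefficient matrix of `(f(s) g(t) - f(t) g(s)) / (s - t)` in formal degree `n`. -/
def bezoutMatrix (f g : R[X]) (n : ℕ) : Matrix (Fin n) (Fin n) R :=
  .of fun i j => ∑ m ∈ Icc ((i : ℕ) - j) (min (i : ℕ) (n - 1 - j)),
    coeffMinor f g (j + m + 1) (i - m)

def lowerToeplitz (f : R[X]) (n : ℕ) : Matrix (Fin n) (Fin n) R :=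
  .of fun i j => if j ≤ i then f.coeff (i - j) else 0

def upperToeplitz (f : R[X]) (n : ℕ) : Matrix (Fin n) (Fin n) R :=
  .of fun i j => f.coeff (n + i - j)

def hankel (f : R[X]) (n : ℕ) : Matrix (Fin n) (Fin n) R :=
  .of fun i j => f.coeff (i + j + 1)

section coeffMinor

variable {f g : R[X]} {n : ℕ}

theorem coeffMinor_swap (f g : R[X]) (a b : ℕ) : coeffMinor f g a b = -coeffMinor f g b a := by
  unfold coeffMinor; ring

theorem coeffMinor_self (f g : R[X]) (a : ℕ) : coeffMinor f g a a = 0 := by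
  unfold coeffMinor; ring

theorem coeffMinor_eq_zero_of_lt_left (hf : f.natDegree ≤ n) (hg : g.natDegree ≤ n) {a : ℕ}
    (ha : n < a) (b : ℕ) : coeffMinor f g a b = 0 := by
  simp [coeffMinor, coeff_eq_zero_of_natDegree_lt (hf.trans_lt ha),
    coeff_eq_zero_of_natDegree_lt (hg.trans_lt ha)]

theorem coeffMinor_eq_zero_of_lt_right (hf : f.natDegree ≤ n) (hg : g.natDegree ≤ n) (a : ℕ)
    {b : ℕ} (hb : n < b) : coeffMinor f g a b = 0 := by
  rw [coeffMinor_swap, coeffMinor_eq_zero_of_lt_left hf hg hb, neg_zero]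

/-- The reflection `r ↦ s + t - 1 - r` pairs each term with its negative. -/
theorem sum_Ico_coeffMinor_eq_zero (f g : R[X]) {a b s t : ℕ} (h : a + s + t = b) :
    ∑ r ∈ Ico s t, coeffMinor f g (a + r + 1) (b - r) = 0 := by
  refine sum_involution (fun r _ => s + t - 1 - r) (fun r hr => ?_) (fun r hr hne => ?_)
    (fun r hr => ?_) (fun r hr => ?_) <;> rw [mem_Ico] at hr
  · rw [show a + (s + t - 1 - r) + 1 = b - r by omega,
      show b - (s + t - 1 - r) = a + r + 1 by omega, coeffMinor_swap, neg_add_cancel]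
  · intro hfix
    rw [show b - r = a + r + 1 by omega, coeffMinor_self] at hne
    exact hne rfl
  · simp only [mem_Ico]; omega
  · omega

end coeffMinor

section blocks

variable {f g : R[X]} {n : ℕ}

theorem lowerToeplitz_mul_hankel_sub (hf : f.natDegree ≤ n) (hg : g.natDegree ≤ n) :
    lowerToeplitz g n * hankel f n - lowerToeplitz f n * hankel g n = bezoutMatrix f g n := by
  ext i j
  have hi := i.isLt
  have hj := j.isLt
  have hterm : ∀ r : Fin n,
      (if r ≤ i then g.coeff (i - r) else 0) * f.coeff (r + j + 1) -
        (if r ≤ i then f.coeff (i - r) else 0) * g.coeff (r + j + 1) =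
      if (r : ℕ) ∈ range (i + 1) then coeffMinor f g (j + r + 1) (i - r) else 0 := by
    intro r
    simp only [Fin.le_def, mem_range, Nat.lt_succ_iff, coeffMinor, Nat.add_comm (r : ℕ) j]
    split_ifs <;> ring
  have hreflect : ∑ r ∈ range (i - j), coeffMinor f g (j + r + 1) (i - r) = 0 := by
    rcases le_or_gt (j : ℕ) i with hji | hij
    · rw [range_eq_Ico]
      exact sum_Ico_coeffMinor_eq_zero f g (by omega)
    · simp [Nat.sub_eq_zero_of_le hij.le]
  simp only [Matrix.sub_apply, mul_apply, lowerToeplitz, hankel, bezoutMatrix,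
    of_apply, ← sum_sub_distrib, hterm]
  rw [Fin.sum_univ_eq_sum_range (fun r => if r ∈ range (i + 1) then
      coeffMinor f g (j + r + 1) (i - r) else 0), sum_ite_mem,
    inter_eq_right.2 (range_subset_range.2 (by omega)),
    ← sum_range_add_sum_Ico _ (by omega : (i : ℕ) - j ≤ i + 1), hreflect, zero_add]
  refine (sum_subset (fun m hm => ?_) fun m hm hm' => ?_).symm
  · simp only [mem_Icc, mem_Ico] at hm ⊢; omega
  · simp only [mem_Icc, mem_Ico] at hm hm'
    exact coeffMinor_eq_zero_of_lt_left hf hg (by omega) _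

theorem upperToeplitz_mul_hankel_sub (hf : f.natDegree ≤ n) (hg : g.natDegree ≤ n) :
    upperToeplitz g n * hankel f n - upperToeplitz f n * hankel g n = 0 := by
  ext i j
  have hi := i.isLt
  have hj := j.isLt
  have hterm : ∀ r : Fin n, g.coeff (n + i - r) * f.coeff (r + j + 1) -
      f.coeff (n + i - r) * g.coeff (r + j + 1) = coeffMinor f g (j + r + 1) (n + i - r) := by
    intro r
    simp only [coeffMinor, Nat.add_comm (r : ℕ) j]
    ring
  simp only [Matrix.sub_apply, mul_apply, upperToeplitz, hankel, of_apply,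
    ← sum_sub_distrib, hterm, Matrix.zero_apply]
  rw [Fin.sum_univ_eq_sum_range (fun r => coeffMinor f g (j + r + 1) (n + i - r)),
    ← sum_subset (s₁ := Ico (i : ℕ) (n - j)) (fun r hr => ?_) fun r hr hr' => ?_]
  · exact sum_Ico_coeffMinor_eq_zero f g (by omega)
  · simp only [mem_Ico, mem_range] at hr ⊢; omega
  · simp only [mem_Ico, mem_range] at hr hr'
    rcases lt_or_ge r i with hri | hir
    · exact coeffMinor_eq_zero_of_lt_right hf hg _ (by omega)
    · exact coeffMinor_eq_zero_of_lt_left hf hg (by omega) _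

theorem det_upperToeplitz (hf : f.natDegree ≤ n) : (upperToeplitz f n).det = f.coeff n ^ n := by
  rw [det_of_isUpperTriangular (M := upperToeplitz f n) fun i j (hji : j < i) =>
    coeff_eq_zero_of_natDegree_lt (hf.trans_lt (by simp only [Fin.lt_def] at hji; omega))]
  simp [upperToeplitz]

theorem hankel_eq_submatrix_rev (f : R[X]) (n : ℕ) :
    hankel f n = (upperToeplitz f n).submatrix id Fin.revPerm := by
  ext i j
  simp only [hankel, upperToeplitz, submatrix_apply, of_apply, id_eq,
    Fin.revPerm_apply, Fin.val_rev]
  congr 1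
  omega

theorem det_hankel (hf : f.natDegree ≤ n) :
    (hankel f n).det = Equiv.Perm.sign (Fin.revPerm : Equiv.Perm (Fin n)) * f.coeff n ^ n := by
  rw [hankel_eq_submatrix_rev, det_permute', det_upperToeplitz hf]

end blocks

theorem sylvester_apply_of_natDegree_le {f g : R[X]} {m n : ℕ} (hf : f.natDegree ≤ m)
    (hg : g.natDegree ≤ n) (i j : Fin (m + n)) :
    sylvester f g m n i j =
      if (j : ℕ) < m then (if (j : ℕ) ≤ i then g.coeff (i - j) else 0)
      else (if (j : ℕ) - m ≤ i then f.coeff (i - (j - m)) else 0) := by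
  induction j using Fin.addCases <;>
    simp only [sylvester, of_apply, Fin.addCases_left, Fin.addCases_right, Fin.val_castAdd,
      Fin.val_natAdd, Fin.is_lt, if_true, Set.mem_Icc, Nat.add_sub_cancel_left,
      add_lt_iff_neg_left, not_lt_zero, if_false] <;>
    split_ifs <;> first | rfl | omega | exact (coeff_eq_zero_of_natDegree_lt (by omega)).symm

theorem sylvester_eq_reindex_fromBlocks {f g : R[X]} {n : ℕ} (hf : f.natDegree ≤ n)
    (hg : g.natDegree ≤ n) :
    sylvester g f n n = reindex finSumFinEquiv finSumFinEquiv
      (fromBlocks (lowerToeplitz f n) (lowerToeplitz g n) (upperToeplitz f n)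
        (upperToeplitz g n)) := by
  ext i j
  induction i using Fin.addCases <;> induction j using Fin.addCases <;>
    simp only [reindex_apply, submatrix_apply, finSumFinEquiv_symm_apply_castAdd,
      finSumFinEquiv_symm_apply_natAdd, fromBlocks_apply₁₁, fromBlocks_apply₁₂,
      fromBlocks_apply₂₁, fromBlocks_apply₂₂, sylvester_apply_of_natDegree_le hg hf,
      Fin.val_castAdd, Fin.val_natAdd, lowerToeplitz, upperToeplitz, of_apply, Fin.le_def,
      Fin.is_lt, if_true, add_lt_iff_neg_left, not_lt_zero, if_false, Nat.add_sub_cancel_left] <;>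
    split_ifs <;> first | rfl | omega

theorem exists_coeff_pow_mul_det_bezoutMatrix {f g : R[X]} {n : ℕ} (hf : f.natDegree ≤ n)
    (hg : g.natDegree ≤ n) : ∃ ε : ℤˣ,
      f.coeff n ^ n * (bezoutMatrix f g n).det = ε * (f.coeff n ^ n * resultant g f n n) := by
  have hprod : fromBlocks (lowerToeplitz f n) (lowerToeplitz g n) (upperToeplitz f n)
        (upperToeplitz g n) * fromBlocks 1 (-hankel g n) 0 (hankel f n) =
      (fromBlocks (bezoutMatrix f g n) (lowerToeplitz f n) 0 (upperToeplitz f n)).submatrix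
        id (Equiv.sumComm _ _) := by
    rw [fromBlocks_multiply, show ⇑(Equiv.sumComm (Fin n) (Fin n)) = Sum.swap from rfl,
      fromBlocks_submatrix_sum_swap_right, submatrix_id_id]
    congr 1
    · simp
    · rw [Matrix.mul_neg, neg_add_eq_sub, lowerToeplitz_mul_hankel_sub hf hg]
    · simp
    · rw [Matrix.mul_neg, neg_add_eq_sub, upperToeplitz_mul_hankel_sub hf hg]
  have hdet := congrArg det hprod
  rw [det_mul, det_permute', det_fromBlocks_zero₂₁,
    det_fromBlocks_zero₂₁, det_one, one_mul, det_hankel hf, det_upperToeplitz hf,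
    ← det_reindex_self finSumFinEquiv, ← sylvester_eq_reindex_fromBlocks hf hg,
    ← resultant] at hdet
  set σ := Equiv.Perm.sign (Equiv.sumComm (Fin n) (Fin n))
  have hσ : (σ : R) * σ = 1 := by
    rw [← Int.cast_mul, ← Units.val_mul, Int.units_mul_self, Units.val_one, Int.cast_one]
  refine ⟨σ * Equiv.Perm.sign (Fin.revPerm : Equiv.Perm (Fin n)), ?_⟩
  push_cast
  linear_combination -(σ : R) * hdet - ((bezoutMatrix f g n).det * f.coeff n ^ n) * hσ

theorem bezoutMatrix_map {S : Type*} [CommRing S] (φ : R →+* S) (f g : R[X]) (n : ℕ) :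
    (bezoutMatrix f g n).map φ = bezoutMatrix (f.map φ) (g.map φ) n := by
  ext i j
  simp [bezoutMatrix, coeffMinor]

theorem exists_det_bezoutMatrix_eq_sign_mul_resultant {f g : R[X]} {n : ℕ}
    (hf : f.natDegree ≤ n) (hg : g.natDegree ≤ n) :
    ∃ ε : ℤˣ, (bezoutMatrix f g n).det = ε * resultant g f n n := by
  set F : R[X][X] := f.map C + C X * X ^ n
  set G : R[X][X] := g.map C
  have hF : F.natDegree ≤ n :=
    natDegree_add_le_of_degree_le (natDegree_map_le.trans hf) (natDegree_C_mul_X_pow_le _ _)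
  have hG : G.natDegree ≤ n := natDegree_map_le.trans hg
  have hmonic : (F.coeff n).Monic := by
    simpa [F, add_comm] using monic_X_add_C (f.coeff n)
  obtain ⟨ε, hε⟩ := exists_coeff_pow_mul_det_bezoutMatrix hF hG
  have hcancel := (hmonic.pow n).isRegular.left (hε.trans (mul_left_comm _ _ _))
  have hid : (evalRingHom (0 : R)).comp C = RingHom.id R := RingHom.ext fun _ => eval_C
  have hFf : F.map (evalRingHom 0) = f := by simp [F, map_map, hid]
  have hGg : G.map (evalRingHom 0) = g := by simp [G, map_map, hid]
  refine ⟨ε, ?_⟩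
  have := congrArg (evalRingHom (0 : R)) hcancel
  rwa [RingHom.map_det, map_mul, map_intCast, RingHom.mapMatrix_apply, bezoutMatrix_map,
    ← resultant_map_map, hFf, hGg] at this

theorem natDegree_lt_of_coeff_eq_zero {p : R[X]} {m : ℕ} (hp : p.natDegree ≤ m)
    (hpm : p.coeff m = 0) (hm : m ≠ 0) : p.natDegree < m := by
  refine hp.lt_of_ne fun h => hm ?_
  rw [← h, coeff_natDegree, leadingCoeff_eq_zero] at hpm
  rw [← h, hpm, natDegree_zero]

section IsAlgClosed

variable {K : Type*} [Field K] [IsAlgClosed K] {f g : K[X]} {m n : ℕ}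

theorem not_isCoprime_iff_exists_eval_eq_zero :
    ¬IsCoprime f g ↔ ∃ z, f.eval z = 0 ∧ g.eval z = 0 := by
  rw [isCoprime_iff_aeval_ne_zero_of_isAlgClosed (k := K) K]
  simp

theorem resultant_eq_zero_iff_of_coeff_ne_zero (hf : f.natDegree ≤ m) (hfm : f.coeff m ≠ 0)
    (hg : g.natDegree ≤ n) : resultant f g m n = 0 ↔ ∃ z, f.eval z = 0 ∧ g.eval z = 0 := by
  obtain rfl := natDegree_eq_of_le_of_coeff_ne_zero hf hfm
  obtain ⟨d, rfl⟩ := Nat.exists_eq_add_of_le hg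
  rw [resultant_add_right_deg _ _ _ _ _ le_rfl, mul_eq_zero, or_iff_right (pow_ne_zero _ hfm),
    resultant_eq_zero_iff, ← not_isCoprime_iff_exists_eval_eq_zero,
    and_iff_right (Or.inl fun h => hfm (by simp [h]))]

theorem resultant_eq_zero_iff_of_natDegree_le (hf : f.natDegree ≤ m) (hg : g.natDegree ≤ n)
    (hmn : m ≠ 0 ∨ n ≠ 0) :
    resultant f g m n = 0 ↔
      (∃ z, f.eval z = 0 ∧ g.eval z = 0) ∨ (f.coeff m = 0 ∧ g.coeff n = 0) := by
  by_cases hfm : f.coeff m = 0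
  · by_cases hgn : g.coeff n = 0
    · simp only [hfm, hgn, and_self, or_true, iff_true]
      rcases eq_or_ne m 0 with rfl | hm
      · rw [eq_C_of_natDegree_le_zero hf, hfm, C_0, resultant_zero_left,
          zero_pow (hmn.resolve_left (not_not.2 rfl)), zero_mul]
      rcases eq_or_ne n 0 with rfl | hn
      · rw [eq_C_of_natDegree_le_zero hg, hgn, C_0, resultant_zero_right, zero_pow hm, zero_mul]
      exact resultant_eq_zero_of_lt_lt _ _ _ _ (natDegree_lt_of_coeff_eq_zero hf hfm hm)
        (natDegree_lt_of_coeff_eq_zero hg hgn hn)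
    · rw [resultant_comm, mul_eq_zero, or_iff_right (pow_ne_zero _ (neg_ne_zero.2 one_ne_zero)),
        resultant_eq_zero_iff_of_coeff_ne_zero hg hgn hf]
      simp [hgn, and_comm]
  · rw [resultant_eq_zero_iff_of_coeff_ne_zero hf hfm hg]
    simp [hfm]

end IsAlgClosed

section ofFn

variable [DecidableEq R]

theorem coeff_ofFn {n : ℕ} (v : Fin n → R) (m : ℕ) :
    (ofFn n v).coeff m = if h : m < n then v ⟨m, h⟩ else 0 := by
  split_ifs with h
  · exact ofFn_coeff_eq_val_of_lt v h
  · exact ofFn_coeff_eq_zero_of_ge v (not_lt.1 h)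

theorem eval_ofFn {n : ℕ} (v : Fin n → R) (z : R) :
    (ofFn n v).eval z = ∑ i : Fin n, v i * z ^ (i : ℕ) := by
  simp [ofFn_eq_sum_monomial, eval_finsetSum]

end ofFn

end Polynomial

/-- Bézout matrix versus resultant.  For `f = ∑ xₘ tᵐ`, `g = ∑ yₘ tᵐ` of
formal degree `n = k+1`, the `(k+1) × (k+1)` Bézout matrix with entries
`B_{ij} = ∑_{m = max(0,i−j)}^{min(i, n−1−j)} p_{(j+m+1),(i−m)}`, where
`p_{a,b} = x_a y_b − x_b y_a`, has determinant equal (up to sign) to the resultant (the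
Sylvester determinant); in particular `det B = 0` iff `f` and `g` have a common root in
`ℂ` or both leading coefficients vanish. -/
theorem stmt16 (k : ℕ) (x y : Fin (k + 2) → ℂ)
    (X Y : ℕ → ℂ)
    (hX : ∀ m : ℕ, X m = if h : m < k + 2 then x ⟨m, h⟩ else 0)
    (hY : ∀ m : ℕ, Y m = if h : m < k + 2 then y ⟨m, h⟩ else 0)
    (p : ℕ → ℕ → ℂ) (hp : ∀ a b, p a b = X a * Y b - X b * Y a)
    (Syl : Matrix (Fin (2 * (k + 1))) (Fin (2 * (k + 1))) ℂ)
    (hSyl : ∀ r c : Fin (2 * (k + 1)), Syl r c =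
      if (r : ℕ) < k + 1 then
        (if (r : ℕ) ≤ (c : ℕ) then X ((c : ℕ) - (r : ℕ)) else 0)
      else
        (if (r : ℕ) - (k + 1) ≤ (c : ℕ) then Y ((c : ℕ) - ((r : ℕ) - (k + 1))) else 0))
    (B : Matrix (Fin (k + 1)) (Fin (k + 1)) ℂ)
    (hB : ∀ i j : Fin (k + 1), B i j =
      ∑ m ∈ Finset.Icc ((i : ℕ) - (j : ℕ)) (min (i : ℕ) (k - (j : ℕ))),
        p ((j : ℕ) + m + 1) ((i : ℕ) - m)) :
    (B.det = Syl.det ∨ B.det = -Syl.det) ∧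
    (B.det = 0 ↔
      (∃ z : ℂ, (∑ m : Fin (k + 2), x m * z ^ (m : ℕ)) = 0 ∧
        (∑ m : Fin (k + 2), y m * z ^ (m : ℕ)) = 0) ∨
      (x ⟨k + 1, by omega⟩ = 0 ∧ y ⟨k + 1, by omega⟩ = 0)) := by
  set f := Polynomial.ofFn (k + 2) x
  set g := Polynomial.ofFn (k + 2) y
  have hfX : ∀ m, f.coeff m = X m := fun m => (Polynomial.coeff_ofFn x m).trans (hX m).symm
  have hgY : ∀ m, g.coeff m = Y m := fun m => (Polynomial.coeff_ofFn y m).trans (hY m).symm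
  have hf : f.natDegree ≤ k + 1 := Nat.lt_succ_iff.1 (Polynomial.ofFn_natDegree_lt (by omega) x)
  have hg : g.natDegree ≤ k + 1 := Nat.lt_succ_iff.1 (Polynomial.ofFn_natDegree_lt (by omega) y)
  have hBezout : B = Polynomial.bezoutMatrix f g (k + 1) := by
    ext i j
    simp [hB, Polynomial.bezoutMatrix, Polynomial.coeffMinor, hp, hfX, hgY]
  have hSylvester : Syl.det = Polynomial.resultant g f (k + 1) (k + 1) := by
    rw [Polynomial.resultant, ← det_transpose,
      ← det_submatrix_equiv_self (finCongr (two_mul (k + 1)))]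
    congr
    ext r c
    simp [hSyl, Polynomial.sylvester_apply_of_natDegree_le hg hf, hfX, hgY]
  obtain ⟨ε, hε⟩ := Polynomial.exists_det_bezoutMatrix_eq_sign_mul_resultant hf hg
  have hdet : B.det = ε * Syl.det := by rw [hBezout, hε, hSylvester]
  refine ⟨?_, ?_⟩
  · rcases Int.units_eq_one_or ε with rfl | rfl <;> simp [hdet]
  · rw [hdet, mul_eq_zero, or_iff_right (by simp), hSylvester,
      Polynomial.resultant_eq_zero_iff_of_natDegree_le hg hf (Or.inl k.succ_ne_zero)]
    simp [f, g, Polynomial.eval_ofFn, and_comm]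
end
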